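/- arXiv:2502.14640 — 5 statements merged into one kernel-verified Lean document; each statement's English description precedes it below -/
import Mathlib

section
/- Let Γ̂ be a spider's web associated to a rooted tree T. Then for each pair of vertices x and y in Γ̂ there exists a geodesic in (Γ̂, d_{Γ̂}) joining them which is standard, i.e. a concatenation of an ascending geodesic, a horizontal geodesic, and a descending geodesic (each possibly reduced to a point). -/
/-- A spider's web: a graph `G` obtained from a rooted tree `T` (root `o`,
predecessor map `p`, level function `lvl`) by adding edges, such that added edges
only join vertices of the same level, and two same-level neighbours have
predecessors that coincide or are neighbours. -/
structure SpiderWeb (V : Type*) where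
  G : SimpleGraph V
  T : SimpleGraph V
  o : V
  p : V → V
  lvl : V → ℕ
  lvl_root : lvl o = 0
  root_eq : ∀ x, lvl x = 0 → x = o
  p_lvl : ∀ x, x ≠ o → lvl (p x) + 1 = lvl x
  T_adj : ∀ x y, T.Adj x y ↔ (x ≠ o ∧ p x = y) ∨ (y ≠ o ∧ p y = x)
  T_le_G : T ≤ G
  T_connected : T.Connected
  adj_lvl : ∀ x y, G.Adj x y → ¬ T.Adj x y → lvl x = lvl y
  horiz : ∀ x y, G.Adj x y → lvl x = lvl y → p x = p y ∨ G.Adj (p x) (p y)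

namespace SpiderAux

variable {V : Type*}

lemma chain_walk (G : SimpleGraph V) (c : ℕ → V) :
    ∀ m, (∀ i < m, G.Adj (c i) (c (i + 1))) →
      ∃ w : G.Walk (c 0) (c m), w.length = m := by
  intro m
  induction m with
  | zero => exact fun _ => ⟨SimpleGraph.Walk.nil, rfl⟩
  | succ m ih =>
    intro h
    obtain ⟨w, hw⟩ := ih (fun i hi => h i (Nat.lt_succ_of_lt hi))
    exact ⟨w.concat (h m (Nat.lt_succ_self m)),
      by simp [SimpleGraph.Walk.length_concat, hw]⟩

lemma chain_dist (G : SimpleGraph V) (c : ℕ → V) (m : ℕ)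
    (h : ∀ i < m, G.Adj (c i) (c (i + 1))) : G.dist (c 0) (c m) ≤ m := by
  obtain ⟨w, hw⟩ := chain_walk G c m h
  simpa [hw] using SimpleGraph.dist_le w

lemma ne_root (S : SpiderWeb V) {a : V} (h : 0 < S.lvl a) : a ≠ S.o := by
  intro e; rw [e, S.lvl_root] at h; omega

lemma adj_p (S : SpiderWeb V) {a : V} (h : a ≠ S.o) : S.G.Adj a (S.p a) :=
  S.T_le_G ((S.T_adj a (S.p a)).2 (Or.inl ⟨h, rfl⟩))

lemma step_down (S : SpiderWeb V) {a b : V} (h : S.G.Adj a b)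
    (hl : S.lvl b < S.lvl a) : S.p a = b := by
  have ht : S.T.Adj a b := by
    by_contra hT
    have := S.adj_lvl a b h hT
    omega
  rcases (S.T_adj a b).1 ht with ⟨_, hp⟩ | ⟨hb, hp⟩
  · exact hp
  · exfalso
    have := S.p_lvl b hb
    rw [hp] at this
    omega

lemma skip1 (G : SimpleGraph V) (c : ℕ → V) (n i : ℕ) (hi : i + 1 < n)
    (hadj : ∀ j < n, G.Adj (c j) (c (j + 1))) (hskip : G.Adj (c i) (c (i + 2))) :
    G.dist (c 0) (c n) < n := by
  set c' : ℕ → V := fun j => if j ≤ i then c j else c (j + 1) with hc'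
  have h0 : c' 0 = c 0 := by simp [hc']
  have hm : c' (n - 1) = c n := by
    have hni : ¬ (n - 1 ≤ i) := by omega
    simp only [hc', if_neg hni]
    congr 1
    omega
  have hadj' : ∀ j < n - 1, G.Adj (c' j) (c' (j + 1)) := by
    intro j hj
    rcases lt_trichotomy j i with hji | rfl | hji
    · simp only [hc', if_pos (le_of_lt hji), if_pos (by omega : j + 1 ≤ i)]
      exact hadj j (by omega)
    · simp only [hc', if_pos (le_refl j), if_neg (by omega : ¬ j + 1 ≤ j)]
      exact hskip
    · simp only [hc', if_neg (by omega : ¬ j ≤ i), if_neg (by omega : ¬ j + 1 ≤ i)]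
      exact hadj (j + 1) (by omega)
  have hd := chain_dist G c' (n - 1) hadj'
  rw [h0, hm] at hd
  omega

lemma skip2 (G : SimpleGraph V) (c : ℕ → V) (n i : ℕ) (hi : i + 1 < n)
    (hadj : ∀ j < n, G.Adj (c j) (c (j + 1))) (heq : c i = c (i + 2)) :
    G.dist (c 0) (c n) < n := by
  set c' : ℕ → V := fun j => if j ≤ i then c j else c (j + 2) with hc'
  have h0 : c' 0 = c 0 := by simp [hc']
  have hm : c' (n - 2) = c n := by
    rcases le_or_gt (n - 2) i with hle | hlt
    · simp only [hc', if_pos hle]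
      have h1 : n - 2 = i := by omega
      rw [h1, heq]
      congr 1
      omega
    · simp only [hc', if_neg (not_le.mpr hlt)]
      congr 1
      omega
  have hadj' : ∀ j < n - 2, G.Adj (c' j) (c' (j + 1)) := by
    intro j hj
    rcases lt_trichotomy j i with hji | rfl | hji
    · simp only [hc', if_pos (le_of_lt hji), if_pos (by omega : j + 1 ≤ i)]
      exact hadj j (by omega)
    · simp only [hc', if_pos (le_refl j), if_neg (by omega : ¬ j + 1 ≤ j)]
      rw [heq]
      exact hadj (j + 2) (by omega)
    · simp only [hc', if_neg (by omega : ¬ j ≤ i), if_neg (by omega : ¬ j + 1 ≤ i)]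
      exact hadj (j + 2) (by omega)
  have hd := chain_dist G c' (n - 2) hadj'
  rw [h0, hm] at hd
  omega

lemma update_props (S : SpiderWeb V) (n i : ℕ) (c : ℕ → V) (b' : V) (hi : i + 1 < n)
    (hab : S.G.Adj (c i) b') (hbc : S.G.Adj b' (c (i + 2)))
    (hadj : ∀ j < n, S.G.Adj (c j) (c (j + 1)))
    (hlvlb : S.lvl b' + 1 = S.lvl (c (i + 1))) :
    (Function.update c (i + 1) b') 0 = c 0 ∧ (Function.update c (i + 1) b') n = c n ∧
    (∀ j < n, S.G.Adj (Function.update c (i + 1) b' j) (Function.update c (i + 1) b' (j + 1))) ∧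
    (∑ j ∈ Finset.range (n + 1), S.lvl (Function.update c (i + 1) b' j)) + 1
      = ∑ j ∈ Finset.range (n + 1), S.lvl (c j) := by
  have e1 : ∀ j, j ≠ i + 1 → Function.update c (i + 1) b' j = c j :=
    fun j hj => Function.update_of_ne hj _ _
  have e2 : Function.update c (i + 1) b' (i + 1) = b' := Function.update_self _ _ _
  refine ⟨e1 0 (by omega), e1 n (by omega), ?_, ?_⟩
  · intro j hj
    rcases eq_or_ne j i with rfl | hj1
    · rw [e1 j (by omega), e2]
      exact hab
    rcases eq_or_ne j (i + 1) with rfl | hj2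
    · rw [e2, e1 (i + 1 + 1) (by omega)]
      exact hbc
    · rw [e1 j hj2, e1 (j + 1) (by omega)]
      exact hadj j hj
  · have hmem : i + 1 ∈ Finset.range (n + 1) := Finset.mem_range.mpr (by omega)
    rw [← Finset.add_sum_erase _ (fun j => S.lvl (Function.update c (i + 1) b' j)) hmem,
        ← Finset.add_sum_erase _ (fun j => S.lvl (c j)) hmem]
    have hsc : ∑ j ∈ (Finset.range (n + 1)).erase (i + 1),
          S.lvl (Function.update c (i + 1) b' j)
        = ∑ j ∈ (Finset.range (n + 1)).erase (i + 1), S.lvl (c j) :=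
      Finset.sum_congr rfl fun j hj => by rw [e1 j (Finset.ne_of_mem_erase hj)]
    rw [e2] at *
    omega

lemma nobad (S : SpiderWeb V) (n : ℕ) (c : ℕ → V)
    (hadj : ∀ i < n, S.G.Adj (c i) (c (i + 1)))
    (hU : ∀ i, i + 1 < n → S.lvl (c i) < S.lvl (c (i + 1)) →
      S.lvl (c (i + 1)) < S.lvl (c (i + 2)))
    (hH : ∀ i, i + 1 < n → S.lvl (c i) = S.lvl (c (i + 1)) →
      S.lvl (c (i + 1)) ≤ S.lvl (c (i + 2))) :
    ∃ k₁ k₂ : ℕ, k₁ ≤ k₂ ∧ k₂ ≤ n ∧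
      (∀ i < k₁, c (i + 1) = S.p (c i)) ∧
      (∀ i, k₁ ≤ i → i < k₂ → S.lvl (c (i + 1)) = S.lvl (c i)) ∧
      (∀ i, k₂ ≤ i → i < n → c i = S.p (c (i + 1))) := by
  classical
  have hP2 : ∃ k, n ≤ k ∨ S.lvl (c k) < S.lvl (c (k + 1)) := ⟨n, Or.inl le_rfl⟩
  obtain ⟨k₂, hk₂spec, hk₂min⟩ :
      ∃ k, (n ≤ k ∨ S.lvl (c k) < S.lvl (c (k + 1))) ∧
        ∀ m < k, ¬(n ≤ m ∨ S.lvl (c m) < S.lvl (c (m + 1))) :=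
    ⟨Nat.find hP2, Nat.find_spec hP2, fun m hm => Nat.find_min hP2 hm⟩
  have hk2n : k₂ ≤ n := by
    by_contra h
    exact hk₂min n (by omega) (Or.inl le_rfl)
  have hlt2 : ∀ i < k₂, i < n ∧ S.lvl (c (i + 1)) ≤ S.lvl (c i) := by
    intro i hi
    have h := hk₂min i hi
    push_neg at h
    exact ⟨by omega, by omega⟩
  have hUall : ∀ i, k₂ ≤ i → i < n → S.lvl (c i) < S.lvl (c (i + 1)) := by
    intro i hki
    induction i, hki using Nat.le_induction with
    | base =>
      intro hn2
      rcases hk₂spec with h | h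
      · omega
      · exact h
    | succ i hki ih =>
      intro hn2
      exact hU i (by omega) (ih (by omega))
  have hP1 : ∃ k, k₂ ≤ k ∨ S.lvl (c (k + 1)) = S.lvl (c k) := ⟨k₂, Or.inl le_rfl⟩
  obtain ⟨k₁, hk₁spec, hk₁min⟩ :
      ∃ k, (k₂ ≤ k ∨ S.lvl (c (k + 1)) = S.lvl (c k)) ∧
        ∀ m < k, ¬(k₂ ≤ m ∨ S.lvl (c (m + 1)) = S.lvl (c m)) :=
    ⟨Nat.find hP1, Nat.find_spec hP1, fun m hm => Nat.find_min hP1 hm⟩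
  have hk1k2 : k₁ ≤ k₂ := by
    by_contra h
    exact hk₁min k₂ (by omega) (Or.inl le_rfl)
  refine ⟨k₁, k₂, hk1k2, hk2n, ?_, ?_, ?_⟩
  · intro i hi
    have h := hk₁min i hi
    push_neg at h
    obtain ⟨hik2, hne⟩ := h
    obtain ⟨hin, hle⟩ := hlt2 i (by omega)
    have hlt : S.lvl (c (i + 1)) < S.lvl (c i) := lt_of_le_of_ne hle hne
    exact (step_down S (hadj i hin) hlt).symm
  · intro i hki
    induction i, hki using Nat.le_induction with
    | base =>
      intro h12
      rcases hk₁spec with h | h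
      · omega
      · exact h
    | succ i hki ih =>
      intro h2
      have hei : S.lvl (c (i + 1)) = S.lvl (c i) := ih (by omega)
      obtain ⟨hin, hle⟩ := hlt2 (i + 1) h2
      have hle' : S.lvl (c (i + 2)) ≤ S.lvl (c (i + 1)) := hle
      have h1 : S.lvl (c (i + 1)) ≤ S.lvl (c (i + 2)) := hH i (by omega) hei.symm
      show S.lvl (c (i + 2)) = S.lvl (c (i + 1))
      omega
  · intro i h1 h2
    have hlt := hUall i h1 h2
    exact (step_down S (hadj i h2).symm hlt).symm

lemma aux (S : SpiderWeb V) (x y : V) (n : ℕ) (hn : n = S.G.dist x y) :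
    ∀ M : ℕ, ∀ c : ℕ → V,
      (∑ i ∈ Finset.range (n + 1), S.lvl (c i)) ≤ M →
      c 0 = x → c n = y → (∀ i < n, S.G.Adj (c i) (c (i + 1))) →
      ∃ (k₁ k₂ : ℕ) (c' : ℕ → V),
        c' 0 = x ∧ c' n = y ∧ (∀ i < n, S.G.Adj (c' i) (c' (i + 1))) ∧
        k₁ ≤ k₂ ∧ k₂ ≤ n ∧
        (∀ i < k₁, c' (i + 1) = S.p (c' i)) ∧
        (∀ i, k₁ ≤ i → i < k₂ → S.lvl (c' (i + 1)) = S.lvl (c' i)) ∧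
        (∀ i, k₂ ≤ i → i < n → c' i = S.p (c' (i + 1))) := by
  intro M
  induction M with
  | zero =>
    intro c hsum h0 hn' hadj
    have hz : ∀ j, j ≤ n → S.lvl (c j) = 0 := by
      intro j hj
      have hle : S.lvl (c j) ≤ ∑ i ∈ Finset.range (n + 1), S.lvl (c i) :=
        Finset.single_le_sum (f := fun i => S.lvl (c i)) (fun _ _ => Nat.zero_le _)
          (Finset.mem_range.mpr (by omega))
      omega
    obtain ⟨k₁, k₂, h1, h2, h3, h4, h5⟩ := nobad S n c hadj
      (fun i hi hlt => by have := hz (i + 1) (by omega); omega)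
      (fun i hi heq => by
        have := hz (i + 1) (by omega); have := hz (i + 2) (by omega); omega)
    exact ⟨k₁, k₂, c, h0, hn', hadj, h1, h2, h3, h4, h5⟩
  | succ M ih =>
    intro c hsum h0 hn' hadj
    by_cases hbad : ∃ i, i + 1 < n ∧
        ((S.lvl (c i) < S.lvl (c (i + 1)) ∧ S.lvl (c (i + 2)) ≤ S.lvl (c (i + 1))) ∨
         (S.lvl (c i) = S.lvl (c (i + 1)) ∧ S.lvl (c (i + 2)) < S.lvl (c (i + 1))))
    · obtain ⟨i, hi, hb⟩ := hbad
      have hdist : ¬ S.G.dist (c 0) (c n) < n := by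
        rw [h0, hn']
        omega
      rcases hb with ⟨hu, hle⟩ | ⟨heq, hlt⟩
      · have hpi : S.p (c (i + 1)) = c i := step_down S (hadj i (by omega)).symm hu
        rcases lt_or_eq_of_le hle with hlt2 | heq2
        · have hp2 := step_down S (hadj (i + 1) hi) hlt2
          exact absurd (skip2 S.G c n i hi hadj (by rw [← hpi, hp2])) hdist
        · have hne2 : c (i + 2) ≠ S.o := ne_root S (by omega)
          rcases S.horiz _ _ (hadj (i + 1) hi) heq2.symm with hpp | hpadj
          · have h' : S.G.Adj (c (i + 2)) (c i) := by
              rw [← hpi, hpp]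
              exact adj_p S hne2
            exact absurd (skip1 S.G c n i hi hadj h'.symm) hdist
          · have hab : S.G.Adj (c i) (S.p (c (i + 2))) := by
              rw [← hpi]
              exact hpadj
            have hbc : S.G.Adj (S.p (c (i + 2))) (c (i + 2)) := (adj_p S hne2).symm
            have hlvlb : S.lvl (S.p (c (i + 2))) + 1 = S.lvl (c (i + 1)) := by
              have := S.p_lvl (c (i + 2)) hne2
              omega
            obtain ⟨q0, qn, qadj, qsum⟩ :=
              update_props S n i c (S.p (c (i + 2))) hi hab hbc hadj hlvlb
            exact ih (Function.update c (i + 1) (S.p (c (i + 2)))) (by omega)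
              (by rw [q0, h0]) (by rw [qn, hn']) qadj
      · have hp2 : S.p (c (i + 1)) = c (i + 2) := step_down S (hadj (i + 1) hi) hlt
        have hne1 : c i ≠ S.o := ne_root S (by omega)
        rcases S.horiz _ _ (hadj i (by omega)) heq with hpp | hpadj
        · have h' : S.G.Adj (c i) (c (i + 2)) := by
            rw [← hp2, ← hpp]
            exact adj_p S hne1
          exact absurd (skip1 S.G c n i hi hadj h') hdist
        · have hab : S.G.Adj (c i) (S.p (c i)) := adj_p S hne1
          have hbc : S.G.Adj (S.p (c i)) (c (i + 2)) := by
            rw [← hp2]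
            exact hpadj
          have hlvlb : S.lvl (S.p (c i)) + 1 = S.lvl (c (i + 1)) := by
            have := S.p_lvl (c i) hne1
            omega
          obtain ⟨q0, qn, qadj, qsum⟩ :=
            update_props S n i c (S.p (c i)) hi hab hbc hadj hlvlb
          exact ih (Function.update c (i + 1) (S.p (c i))) (by omega)
            (by rw [q0, h0]) (by rw [qn, hn']) qadj
    · have hU' : ∀ i, i + 1 < n → S.lvl (c i) < S.lvl (c (i + 1)) →
          S.lvl (c (i + 1)) < S.lvl (c (i + 2)) := by
        intro i h1 h2
        by_contra h3
        exact hbad ⟨i, h1, Or.inl ⟨h2, by omega⟩⟩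
      have hH' : ∀ i, i + 1 < n → S.lvl (c i) = S.lvl (c (i + 1)) →
          S.lvl (c (i + 1)) ≤ S.lvl (c (i + 2)) := by
        intro i h1 h2
        by_contra h3
        exact hbad ⟨i, h1, Or.inr ⟨h2, by omega⟩⟩
      obtain ⟨k₁, k₂, h1, h2, h3, h4, h5⟩ := nobad S n c hadj hU' hH'
      exact ⟨k₁, k₂, c, h0, hn', hadj, h1, h2, h3, h4, h5⟩

end SpiderAux

/-- In a spider's web, any two vertices are joined by a *standard*
geodesic: an ascending geodesic, followed by a horizontal geodesic, followed by a
descending geodesic (each possibly trivial). -/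
theorem stmt_6 {V : Type*} (S : SpiderWeb V) (x y : V) :
    ∃ (n k₁ k₂ : ℕ) (c : ℕ → V),
      n = S.G.dist x y ∧ c 0 = x ∧ c n = y ∧
      (∀ i < n, S.G.Adj (c i) (c (i + 1))) ∧
      k₁ ≤ k₂ ∧ k₂ ≤ n ∧
      (∀ i < k₁, c (i + 1) = S.p (c i)) ∧
      (∀ i, k₁ ≤ i → i < k₂ → S.lvl (c (i + 1)) = S.lvl (c i)) ∧
      (∀ i, k₂ ≤ i → i < n → c i = S.p (c (i + 1))) := by
  have hconn : S.G.Connected := S.T_connected.mono S.T_le_G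
  obtain ⟨w, hw⟩ := hconn.exists_walk_length_eq_dist x y
  obtain ⟨k₁, k₂, c', h0, hn', hadj, h1, h2, h3, h4, h5⟩ :=
    SpiderAux.aux S x y (S.G.dist x y) rfl
      (∑ i ∈ Finset.range (S.G.dist x y + 1), S.lvl (w.getVert i))
      (fun i => w.getVert i) le_rfl w.getVert_zero
      (by rw [← hw]; exact w.getVert_length)
      (fun i hi => w.adj_getVert_succ (by omega))
  exact ⟨S.G.dist x y, k₁, k₂, c', rfl, h0, hn', hadj, h1, h2, h3, h4, h5⟩
end

section
/- Let Γ̂ be a spider's web such that (Γ̂, d_{Γ̂}) is δ-hyperbolic (four-point condition). Then the horizontal part of any standard geodesic in Γ̂ has length at most 4δ + 1. -/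
/-- The Gromov product of `x` and `y` with respect to `w`, for an `ℕ`-valued
graph distance `d`. -/
noncomputable def gromovProd {V : Type*} (d : V → V → ℕ) (x y w : V) : ℝ :=
  ((d w x : ℝ) + (d w y : ℝ) - (d x y : ℝ)) / 2

namespace SpiderWeb

variable {V : Type*} (S : SpiderWeb V)

lemma G_connected : S.G.Connected := S.T_connected.mono S.T_le_G

lemma adj_lvl_le {x y : V} (h : S.G.Adj x y) : S.lvl y ≤ S.lvl x + 1 := by
  by_cases hT : S.T.Adj x y
  · rcases (S.T_adj x y).1 hT with ⟨hx, hp⟩ | ⟨hy, hp⟩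
    · have := S.p_lvl x hx; rw [hp] at this; omega
    · have := S.p_lvl y hy; rw [hp] at this; omega
  · have := S.adj_lvl x y h hT; omega

lemma walk_lvl {a b : V} (w : S.G.Walk a b) : S.lvl b ≤ S.lvl a + w.length := by
  induction w with
  | nil => simp
  | cons h q ih =>
    have := S.adj_lvl_le h
    simp only [SimpleGraph.Walk.length_cons]
    omega

lemma dist_root_le : ∀ k (z : V), S.lvl z = k → S.G.dist S.o z ≤ k := by
  intro k
  induction k with
  | zero => intro z hz; rw [S.root_eq z hz]; simp [SimpleGraph.dist_self]
  | succ k ih =>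
    intro z hz
    have hzo : z ≠ S.o := fun h => by rw [h, S.lvl_root] at hz; omega
    have hpl : S.lvl (S.p z) = k := by have := S.p_lvl z hzo; omega
    have hadj : S.G.Adj (S.p z) z :=
      (S.T_le_G ((S.T_adj z (S.p z)).2 (Or.inl ⟨hzo, rfl⟩))).symm
    calc S.G.dist S.o z ≤ S.G.dist S.o (S.p z) + S.G.dist (S.p z) z :=
          S.G_connected.dist_triangle
      _ ≤ k + 1 := by
          have h1 := ih (S.p z) hpl
          have h2 : S.G.dist (S.p z) z = 1 := SimpleGraph.dist_eq_one_iff_adj.2 hadj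
          omega

lemma dist_root (z : V) : S.G.dist S.o z = S.lvl z := by
  refine le_antisymm (S.dist_root_le _ z rfl) ?_
  obtain ⟨w, hw⟩ := S.G_connected.exists_walk_length_eq_dist S.o z
  have := S.walk_lvl w
  rw [hw] at this
  have h0 := S.lvl_root
  omega

end SpiderWeb

/-- In a δ-hyperbolic spider's web (four-point condition for the graph
metric), the horizontal part of any standard geodesic has length at most `4δ + 1`. -/
theorem stmt_7 {V : Type*} (S : SpiderWeb V) (δ : ℝ) (hδ : 0 ≤ δ)
    (hhyp : ∀ w x y z : V,
      gromovProd S.G.dist x z w ≥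
        min (gromovProd S.G.dist x y w) (gromovProd S.G.dist y z w) - δ) :
    ∀ (x y : V) (n k₁ k₂ : ℕ) (c : ℕ → V),
      n = S.G.dist x y → c 0 = x → c n = y →
      (∀ i < n, S.G.Adj (c i) (c (i + 1))) →
      k₁ ≤ k₂ → k₂ ≤ n →
      (∀ i < k₁, c (i + 1) = S.p (c i)) →
      (∀ i, k₁ ≤ i → i < k₂ → S.lvl (c (i + 1)) = S.lvl (c i)) →
      (∀ i, k₂ ≤ i → i < n → c i = S.p (c (i + 1))) →
      ((k₂ : ℝ) - (k₁ : ℝ) ≤ 4 * δ + 1) := by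
  intro x y n k₁ k₂ c hn hc0 hcn hadj hk12 hk2n hdesc hhor hasc
  have hconn := S.G_connected
  -- distance along the path is at most the index difference
  have step : ∀ dd i, i + dd ≤ n → S.G.dist (c i) (c (i + dd)) ≤ dd := by
    intro dd
    induction dd with
    | zero => intro i _; simp [SimpleGraph.dist_self]
    | succ d ih =>
      intro i h
      have h1 := ih i (by omega)
      have h2 : S.G.dist (c (i + d)) (c (i + d + 1)) = 1 :=
        SimpleGraph.dist_eq_one_iff_adj.2 (hadj (i + d) (by omega))
      calc S.G.dist (c i) (c (i + (d + 1)))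
          ≤ S.G.dist (c i) (c (i + d)) + S.G.dist (c (i + d)) (c (i + d + 1)) := by
            have := hconn.dist_triangle (u := c i) (v := c (i + d)) (w := c (i + (d+1)))
            simpa [Nat.add_assoc] using this
        _ ≤ d + 1 := by omega
  have steple : ∀ i j, i ≤ j → j ≤ n → S.G.dist (c i) (c j) ≤ j - i := by
    intro i j hij hjn
    have := step (j - i) i (by omega)
    have hji : i + (j - i) = j := by omega
    rwa [hji] at this
  -- exact distances
  have hexact : ∀ i j, i ≤ j → j ≤ n → S.G.dist (c i) (c j) = j - i := by
    intro i j hij hjn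
    refine le_antisymm (steple i j hij hjn) ?_
    have hA : S.G.dist x (c i) ≤ i := by
      have := steple 0 i (by omega) (by omega); rwa [hc0] at this
    have hB : S.G.dist (c j) y ≤ n - j := by
      have := steple j n hjn le_rfl; rwa [hcn] at this
    have ht1 : S.G.dist x y ≤ S.G.dist x (c i) + S.G.dist (c i) y := hconn.dist_triangle
    have ht2 : S.G.dist (c i) y ≤ S.G.dist (c i) (c j) + S.G.dist (c j) y :=
      hconn.dist_triangle
    omega
  -- constant level on horizontal part
  have hlvl : ∀ d, k₁ + d ≤ k₂ → S.lvl (c (k₁ + d)) = S.lvl (c k₁) := by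
    intro d
    induction d with
    | zero => intro _; rfl
    | succ d ih =>
      intro h
      have h1 := ih (by omega)
      have h2 := hhor (k₁ + d) (by omega) (by omega)
      have : k₁ + (d + 1) = (k₁ + d) + 1 := by omega
      rw [this]; omega
  set j := k₁ + (k₂ - k₁) / 2 with hj
  have hjk1 : k₁ ≤ j := by omega
  have hjk2 : j ≤ k₂ := by omega
  -- key distances
  have dk1 : S.G.dist S.o (c k₁) = S.lvl (c k₁) := S.dist_root _
  have dj : S.G.dist S.o (c j) = S.lvl (c k₁) := by
    rw [S.dist_root]
    exact hlvl ((k₂ - k₁) / 2) (by omega)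
  have dk2 : S.G.dist S.o (c k₂) = S.lvl (c k₁) := by
    rw [S.dist_root]
    have := hlvl (k₂ - k₁) (by omega)
    rwa [show k₁ + (k₂ - k₁) = k₂ by omega] at this
  have d1 : S.G.dist (c k₁) (c j) = j - k₁ := hexact k₁ j hjk1 (by omega)
  have d2 : S.G.dist (c j) (c k₂) = k₂ - j := hexact j k₂ hjk2 hk2n
  have d3 : S.G.dist (c k₁) (c k₂) = k₂ - k₁ := hexact k₁ k₂ hk12 hk2n
  have H := hhyp S.o (c k₁) (c j) (c k₂)
  unfold gromovProd at H
  rw [dk1, dj, dk2, d1, d2, d3] at H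
  have e1 : ((j - k₁ : ℕ) : ℝ) = (j : ℝ) - (k₁ : ℝ) := by
    push_cast [Nat.cast_sub hjk1]; ring
  have e2 : ((k₂ - j : ℕ) : ℝ) = (k₂ : ℝ) - (j : ℝ) := by
    push_cast [Nat.cast_sub hjk2]; ring
  have e3 : ((k₂ - k₁ : ℕ) : ℝ) = (k₂ : ℝ) - (k₁ : ℝ) := by
    push_cast [Nat.cast_sub hk12]; ring
  rw [e1, e2, e3] at H
  have hmid1 : 2 * j ≤ k₁ + k₂ := by omega
  have hmid2 : k₁ + k₂ ≤ 2 * j + 1 := by omega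
  have hm1 : 2 * (j : ℝ) ≤ (k₁ : ℝ) + (k₂ : ℝ) := by exact_mod_cast hmid1
  have hm2 : (k₁ : ℝ) + (k₂ : ℝ) ≤ 2 * (j : ℝ) + 1 := by exact_mod_cast hmid2
  rcases min_cases
      ((↑(S.lvl (c k₁)) + ↑(S.lvl (c k₁)) - ((j : ℝ) - (k₁ : ℝ))) / 2)
      ((↑(S.lvl (c k₁)) + ↑(S.lvl (c k₁)) - ((k₂ : ℝ) - (j : ℝ))) / 2) with
    ⟨hmin, _⟩ | ⟨hmin, _⟩ <;> rw [hmin] at H <;> linarith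
end

section
/- Suppose that on a measure space Γ̂ with counting measure μ, the averaging operators A_r f(x) := (1/μ(B_r(x))) ∫_{B_r(x)} f dμ satisfy the bilinear estimate a^{−r}·#{(x,y) ∈ E×F : d(x,y) ≤ r} ≤ C·(√b/a)^r·√(#E·#F) for all finite sets E, F and r ≥ 0, together with the volume bounds c·a^r ≤ μ(B_r(x)) ≤ C·b^r for r ≥ 1, with 1 < a ≤ b < a² and τ := log_a b. Then the global maximal operator M_∞ f := sup_{r≥1} A_r|f| is of weak type (τ,τ): μ({M_∞ f > λ}) ≤ C'·λ^{−τ}·‖f‖_{L^τ}^τ for all λ > 0. -/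
open MeasureTheory

/-- The average of `|f|` over the closed ball of radius `r` centred at `x`, for an
`ℕ`-valued metric `d` and the counting measure. -/
noncomputable def ballAvg {V : Type*} (d : V → V → ℕ) (f : V → ℝ) (r : ℕ) (x : V) : ℝ :=
  (∑' y : {y : V | d x y ≤ r}, |f (y : V)|) / (({y : V | d x y ≤ r} : Set V).ncard : ℝ)

/-- The global maximal operator `M_∞ f = sup_{r ≥ 1} A_r |f|`. -/
noncomputable def globalMax {V : Type*} (d : V → V → ℕ) (f : V → ℝ) (x : V) : ℝ :=
  ⨆ r : {n : ℕ // 1 ≤ n}, ballAvg d f (r : ℕ) x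

open Finset Function

/-!
Decompose `|f|` in base `a`: `F_k = {λ a^(k-1) < |f| ≤ λ a^k}`. If `M_∞ f x > λ`, some ball
`B_r(x)` carries more than `λ c a^r` of `|f|`; pigeonholing against the weights `σ^|k-r| / Q`
(with `σ² = √b / a < 1` and `Q = ∑_{m ∈ ℤ} σ^|m|`) gives a level `k` such that `B_r(x)` contains
more than `Θ = σ^|k-r| c a^r / (Q a^k)` points of `F_k`. For the set `E` of points assigned to
`(r, k)`, counting the pairs in `E × F_k` at distance `≤ r` from below (each point of `E` has at
least `max 1 Θ` partners) and from above by the bilinear estimate gives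
`#E ≤ C² b^r #F_k / (max 1 Θ)² ≲ b^k σ^|k-r| #F_k`. Summing the geometric factor over `r`,
`#{M_∞ f > λ} ≲ ∑_k b^k #F_k ≲ λ^(-τ) ∑ |f|^τ`, because `b^k = (a^k)^τ`.
-/

lemma summable_pow_natAbs {q : ℝ} (hq0 : 0 ≤ q) (hq1 : q < 1) :
    Summable fun m : ℤ => q ^ m.natAbs := by
  have h := summable_geometric_of_lt_one hq0 hq1
  exact summable_int_iff_summable_nat_and_neg.mpr ⟨by simpa using h, by simpa using h⟩

lemma sum_pow_natAbs_le_tsum {ι : Type*} {q : ℝ} (hq0 : 0 ≤ q) (hq1 : q < 1) {g : ι → ℤ}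
    (hg : Injective g) (K : Finset ι) :
    ∑ i ∈ K, q ^ (g i).natAbs ≤ ∑' m : ℤ, q ^ m.natAbs := by
  calc ∑ i ∈ K, q ^ (g i).natAbs = ∑ m ∈ K.map ⟨g, hg⟩, q ^ m.natAbs :=
      (sum_map K ⟨g, hg⟩ fun m => q ^ m.natAbs).symm
    _ ≤ _ := (summable_pow_natAbs hq0 hq1).sum_le_tsum _ fun _ _ => by positivity

lemma tsum_pow_natAbs_pos {q : ℝ} (hq0 : 0 ≤ q) (hq1 : q < 1) : 0 < ∑' m : ℤ, q ^ m.natAbs :=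
  (summable_pow_natAbs hq0 hq1).tsum_pos (fun _ => by positivity) 0 (by simp)

lemma exists_decay_rate {a b : ℝ} (ha : 1 < a) (hab : a ≤ b) (hb : b < a ^ 2) :
    ∃ σ : ℝ, 0 < σ ∧ σ < 1 ∧ b = (σ ^ 2 * a) ^ 2 ∧ 1 ≤ b * σ := by
  have ha0 : 0 < a := by linarith
  have hb0 : 0 < b := by linarith
  have hσ2 : √(√b / a) ^ 2 = √b / a := Real.sq_sqrt (by positivity)
  have hσ1 : √(√b / a) < 1 := (Real.sqrt_lt' one_pos).mpr <| by
    rw [one_pow, div_lt_one ha0]; exact (Real.sqrt_lt' ha0).mpr hb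
  refine ⟨√(√b / a), Real.sqrt_pos.mpr (by positivity), hσ1, ?_, ?_⟩
  · rw [hσ2, div_mul_cancel₀ _ ha0.ne', Real.sq_sqrt (by linarith)]
  · calc 1 ≤ b / a * √b := one_le_mul_of_one_le_of_one_le ((one_le_div ha0).mpr hab)
          (Real.one_le_sqrt.mpr (by linarith))
      _ = b * √(√b / a) ^ 2 := by rw [hσ2]; ring
      _ ≤ b * √(√b / a) := mul_le_mul_of_nonneg_left
          (pow_le_of_le_one (Real.sqrt_nonneg _) hσ1.le two_ne_zero) hb0.le

lemma zpow_ceil_logb_sub_one_lt {a t : ℝ} (ha : 1 < a) (ht : 0 < t) :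
    a ^ (⌈Real.logb a t⌉ - 1) < t := by
  rw [← Real.rpow_intCast, ← Real.lt_logb_iff_rpow_lt ha ht]
  push_cast
  linarith [Int.ceil_lt_add_one (Real.logb a t)]

lemma le_zpow_ceil_logb {a t : ℝ} (ha : 1 < a) (ht : 0 < t) : t ≤ a ^ ⌈Real.logb a t⌉ := by
  rw [← Real.rpow_intCast, ← Real.logb_le_iff_le_rpow ha ht]
  exact Int.le_ceil _

section Levels

variable {V : Type*} (f : V → ℝ) (lam a : ℝ)

/-- The `k`-th level set `{λ a^(k-1) < |f| ≤ λ a^k}`, indexed through `⌈log_a (|f| / λ)⌉`. -/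
def levelSet (k : ℤ) : Set V := {y | f y ≠ 0 ∧ ⌈Real.logb a (|f y| / lam)⌉ = k}

variable {f lam a}

lemma mul_zpow_sub_one_lt_of_mem_levelSet (ha : 1 < a) (hlam : 0 < lam) {k : ℤ} {y : V}
    (hy : y ∈ levelSet f lam a k) : lam * a ^ (k - 1) < |f y| := by
  obtain ⟨hy0, rfl⟩ := hy
  rw [← lt_div_iff₀' hlam]
  exact zpow_ceil_logb_sub_one_lt ha (div_pos (abs_pos.mpr hy0) hlam)

lemma levelSet_finite {τ : ℝ} (ha : 1 < a) (hlam : 0 < lam) (hτ : 0 < τ)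
    (hsum : Summable fun y => |f y| ^ τ) (k : ℤ) : (levelSet f lam a k).Finite := by
  have hε : 0 < (lam * a ^ (k - 1)) ^ τ := by positivity
  have hfin : {y | ¬ |f y| ^ τ < (lam * a ^ (k - 1)) ^ τ}.Finite :=
    Filter.eventually_cofinite.mp (hsum.tendsto_cofinite_zero.eventually (gt_mem_nhds hε))
  refine hfin.subset fun y hy => not_lt.mpr ?_
  exact Real.rpow_le_rpow (by positivity) (mul_zpow_sub_one_lt_of_mem_levelSet ha hlam hy).le
    hτ.le

lemma pairwise_disjoint_levelSet : Pairwise (Disjoint on levelSet f lam a) := by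
  intro k k' hkk'
  exact Set.disjoint_left.mpr fun y hy hy' => hkk' (hy.2.symm.trans hy'.2)

lemma exists_lt_zpow_mul_card_inter_levelSet [DecidableEq V] {B : Finset V} {F : ℤ → Finset V}
    (hF : ∀ k, ↑(F k) = levelSet f lam a k) {A : ℝ} {θ : ℤ → ℝ} (ha : 1 < a) (hlam : 0 < lam)
    (hA : 0 ≤ A) (hθ : ∀ K : Finset ℤ, ∑ k ∈ K, θ k ≤ 1) (hB : lam * A < ∑ y ∈ B, |f y|) :
    ∃ k, θ k * A < a ^ k * #(F k ∩ B) := by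
  by_contra! h
  set ℓ := fun y => ⌈Real.logb a (|f y| / lam)⌉
  set B' := B.filter (f · ≠ 0)
  have hfiber : ∀ k, #{y ∈ B' | ℓ y = k} ≤ #(F k ∩ B) := by
    intro k
    refine card_le_card fun y hy => ?_
    simp only [B', mem_filter] at hy
    rw [mem_inter, ← mem_coe, hF]
    exact ⟨⟨hy.1.2, hy.2⟩, hy.1.1⟩
  have : ∑ y ∈ B, |f y| ≤ lam * A := calc
    ∑ y ∈ B, |f y| = ∑ y ∈ B', |f y| :=
        (sum_filter_of_ne fun y _ hy => abs_ne_zero.mp hy).symm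
    _ ≤ ∑ y ∈ B', lam * a ^ ℓ y := by
        refine sum_le_sum fun y hy => ?_
        rw [← div_le_iff₀' hlam]
        exact le_zpow_ceil_logb ha (div_pos (abs_pos.mpr (mem_filter.mp hy).2) hlam)
    _ = ∑ k ∈ B'.image ℓ, #{y ∈ B' | ℓ y = k} • (lam * a ^ k) :=
        sum_comp (fun k => lam * a ^ k) ℓ
    _ ≤ ∑ k ∈ B'.image ℓ, lam * (θ k * A) := by
        refine sum_le_sum fun k _ => ?_
        rw [nsmul_eq_mul, mul_left_comm]
        refine mul_le_mul_of_nonneg_left ?_ hlam.le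
        calc (#{y ∈ B' | ℓ y = k} : ℝ) * a ^ k ≤ #(F k ∩ B) * a ^ k :=
              mul_le_mul_of_nonneg_right (by exact_mod_cast hfiber k) (by positivity)
          _ ≤ θ k * A := by linarith [h k]
    _ = lam * A * ∑ k ∈ B'.image ℓ, θ k := by
        rw [mul_sum]; exact sum_congr rfl fun k _ => by ring
    _ ≤ lam * A := mul_le_of_le_one_right (by positivity) (hθ _)
  linarith

lemma zpow_le_mul_inv_rpow_mul_rpow {b τ t : ℝ} (ha : 0 < a) (hlam : 0 < lam) (hτ : 0 ≤ τ)
    (hb : a ^ τ = b) {k : ℤ} (ht : lam * a ^ (k - 1) < t) :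
    b ^ k ≤ b * lam⁻¹ ^ τ * t ^ τ := by
  have hb0 : 0 < b := hb ▸ Real.rpow_pos_of_pos ha τ
  calc b ^ k = b * (a ^ (k - 1)) ^ τ := by
        rw [← hb, ← Real.rpow_zpow_comm ha.le, hb, ← zpow_one_add₀ hb0.ne', add_sub_cancel]
    _ = b * lam⁻¹ ^ τ * (lam * a ^ (k - 1)) ^ τ := by
        rw [Real.mul_rpow hlam.le (by positivity), Real.inv_rpow hlam.le, mul_assoc b,
          inv_mul_cancel_left₀ (Real.rpow_pos_of_pos hlam τ).ne']
    _ ≤ b * lam⁻¹ ^ τ * t ^ τ := by gcongr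

lemma sum_zpow_mul_card_le_tsum {b τ : ℝ} {F : ℤ → Finset V} (hF : ∀ k, ↑(F k) = levelSet f lam a k)
    (ha : 1 < a) (hlam : 0 < lam) (hτ : 0 ≤ τ) (hb : a ^ τ = b)
    (hsum : Summable fun y => |f y| ^ τ) (K : Finset ℤ) :
    ∑ k ∈ K, b ^ k * #(F k) ≤ b * lam⁻¹ ^ τ * ∑' y, |f y| ^ τ := by
  classical
  have hdisj : (K : Set ℤ).PairwiseDisjoint F := fun k _ k' _ hkk' => by
    rw [onFun, ← disjoint_coe, hF, hF]
    exact pairwise_disjoint_levelSet hkk'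
  calc ∑ k ∈ K, b ^ k * #(F k) = ∑ k ∈ K, ∑ y ∈ F k, b ^ k := by
        simp only [sum_const, nsmul_eq_mul, mul_comm]
    _ ≤ ∑ k ∈ K, ∑ y ∈ F k, b * lam⁻¹ ^ τ * |f y| ^ τ := by
        refine sum_le_sum fun k _ => sum_le_sum fun y hy => ?_
        refine zpow_le_mul_inv_rpow_mul_rpow (by linarith) hlam hτ hb ?_
        exact mul_zpow_sub_one_lt_of_mem_levelSet ha hlam (hF k ▸ mem_coe.mpr hy)
    _ = b * lam⁻¹ ^ τ * ∑ y ∈ K.biUnion F, |f y| ^ τ := by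
        rw [sum_biUnion hdisj, mul_sum]; simp only [mul_sum]
    _ ≤ b * lam⁻¹ ^ τ * ∑' y, |f y| ^ τ := by
        have hb0 : 0 < b := hb ▸ Real.rpow_pos_of_pos (by linarith) τ
        gcongr
        exact hsum.sum_le_tsum _ fun y _ => by positivity

end Levels

section Balls

variable {V : Type*} {d : V → V → ℕ} {f : V → ℝ} {x : V}

lemma exists_lt_ballAvg {lam : ℝ} (hlam : 0 ≤ lam) (hx : lam < globalMax d f x) :
    ∃ r, 1 ≤ r ∧ lam < ballAvg d f r x := by
  have : Nonempty {n : ℕ // 1 ≤ n} := ⟨⟨1, le_rfl⟩⟩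
  by_cases hbdd : BddAbove (Set.range fun r : {n : ℕ // 1 ≤ n} => ballAvg d f r x)
  · obtain ⟨r, hr⟩ := (lt_ciSup_iff hbdd).mp hx
    exact ⟨r, r.2, hr⟩
  · rw [globalMax, Real.iSup_of_not_bddAbove hbdd] at hx
    exact absurd hx hlam.not_gt

lemma ballAvg_eq_sum_div {r : ℕ} (hB : {y | d x y ≤ r}.Finite) :
    ballAvg d f r x = (∑ y ∈ hB.toFinset, |f y|) / #hB.toFinset := by
  rw [ballAvg, ← Set.ncard_coe_finset, Set.Finite.coe_toFinset,
    ← Finset.tsum_subtype' hB.toFinset fun y => |f y|, Set.Finite.coe_toFinset]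

lemma exists_dense_levelSet [DecidableEq V] {lam a c : ℝ} {F : ℤ → Finset V}
    (hF : ∀ k, ↑(F k) = levelSet f lam a k) {θ : ℕ → ℤ → ℝ} (ha : 1 < a) (hc : 0 < c)
    (hlam : 0 < lam) (hθ : ∀ r (K : Finset ℤ), ∑ k ∈ K, θ r k ≤ 1)
    (hvol : ∀ (x : V) (r : ℕ), 1 ≤ r → c * a ^ r ≤ ({y | d x y ≤ r}.ncard : ℝ))
    (hx : lam < globalMax d f x) :
    ∃ p : ℕ × ℤ, θ p.1 p.2 * (c * a ^ p.1) <
      a ^ p.2 * #((F p.2).bipartiteAbove (fun x y => d x y ≤ p.1) x) := by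
  obtain ⟨r, hr, hravg⟩ := exists_lt_ballAvg hlam.le hx
  have hvolr := hvol x r hr
  have hpos : (0 : ℝ) < {y | d x y ≤ r}.ncard := by
    have : 0 < a := by linarith
    exact hvolr.trans_lt' (by positivity)
  have hB : {y | d x y ≤ r}.Finite := Set.finite_of_ncard_pos (by exact_mod_cast hpos)
  rw [Set.ncard_eq_toFinset_card _ hB] at hvolr hpos
  rw [ballAvg_eq_sum_div hB, lt_div_iff₀ hpos] at hravg
  obtain ⟨k, hk⟩ := exists_lt_zpow_mul_card_inter_levelSet hF ha hlam (by positivity) (hθ r)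
    (hravg.trans_le' (mul_le_mul_of_nonneg_left hvolr hlam.le))
  refine ⟨(r, k), hk.trans_eq ?_⟩
  congr 3
  ext y
  simp [bipartiteAbove]

end Balls

lemma card_filter_product_eq_sum_card_bipartiteAbove {α β : Type*} (r : α → β → Prop)
    [∀ a b, Decidable (r a b)] (s : Finset α) (t : Finset β) :
    #{q ∈ s ×ˢ t | r q.1 q.2} = ∑ a ∈ s, #(t.bipartiteAbove r a) := by
  simp only [card_filter, bipartiteAbove, sum_product]

lemma card_mul_sq_le_of_card_filter_product_le {α β : Type*} {r : α → β → Prop}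
    [∀ a b, Decidable (r a b)] {E : Finset α} {F : Finset β} {K m : ℝ} (hm : 0 < m)
    (hpairs : (#{q ∈ E ×ˢ F | r q.1 q.2} : ℝ) ≤ K * √(#E * #F))
    (hE : ∀ x ∈ E, m ≤ #(F.bipartiteAbove r x)) :
    #E * m ^ 2 ≤ K ^ 2 * #F := by
  have hlow : #E * m ≤ #{q ∈ E ×ˢ F | r q.1 q.2} := by
    rw [card_filter_product_eq_sum_card_bipartiteAbove, Nat.cast_sum, ← nsmul_eq_mul]
    exact card_nsmul_le_sum _ _ _ hE
  have hsq : (#E * m) ^ 2 ≤ K ^ 2 * (#E * #F) := by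
    calc (#E * m) ^ 2 ≤ (K * √(#E * #F)) ^ 2 :=
          pow_le_pow_left₀ (by positivity) (hlow.trans hpairs) 2
      _ = K ^ 2 * (#E * #F) := by rw [mul_pow, Real.sq_sqrt (by positivity)]
  rcases (Nat.cast_nonneg (α := ℝ) #E).eq_or_lt with hE0 | hEpos
  · rw [← hE0, zero_mul]; positivity
  · nlinarith

def BilinearEstimate {V : Type*} (d : V → V → ℕ) (a b C : ℝ) : Prop :=
  ∀ (r : ℕ) (E F : Set V), E.Finite → F.Finite →
    (({q : V × V | q.1 ∈ E ∧ q.2 ∈ F ∧ d q.1 q.2 ≤ r} : Set (V × V)).ncard : ℝ) / a ^ r ≤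
      C * (Real.sqrt b / a) ^ r * Real.sqrt ((E.ncard : ℝ) * (F.ncard : ℝ))

lemma BilinearEstimate.card_mul_sq_le {V : Type*} {d : V → V → ℕ} {a b C : ℝ}
    (hbil : BilinearEstimate d a b C) (ha : 0 < a) (hb : 0 ≤ b) {r : ℕ} {E F : Finset V}
    {m : ℝ} (hm : 0 < m) (hE : ∀ x ∈ E, m ≤ #(F.bipartiteAbove (fun x y => d x y ≤ r) x)) :
    #E * m ^ 2 ≤ C ^ 2 * b ^ r * #F := by
  have hpairs : (#{q ∈ E ×ˢ F | d q.1 q.2 ≤ r} : ℝ) ≤ C * √b ^ r * √(#E * #F) := by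
    have h := hbil r E F E.finite_toSet F.finite_toSet
    have hset : {q : V × V | q.1 ∈ (E : Set V) ∧ q.2 ∈ (F : Set V) ∧ d q.1 q.2 ≤ r} =
        ↑({q ∈ E ×ˢ F | d q.1 q.2 ≤ r}) := by
      ext q; simp only [coe_filter, mem_product, mem_coe, and_assoc]
    rw [hset, Set.ncard_coe_finset, Set.ncard_coe_finset, Set.ncard_coe_finset,
      div_le_iff₀ (pow_pos ha r)] at h
    calc _ ≤ _ := h
      _ = C * √b ^ r * √(#E * #F) := by
        rw [div_pow, mul_right_comm, mul_assoc C, div_mul_cancel₀ _ (pow_ne_zero r ha.ne')]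
  calc #E * m ^ 2 ≤ (C * √b ^ r) ^ 2 * #F :=
        card_mul_sq_le_of_card_filter_product_le (r := fun x y => d x y ≤ r) hm hpairs hE
    _ = C ^ 2 * b ^ r * #F := by rw [mul_pow, ← pow_mul, mul_comm r, pow_mul, Real.sq_sqrt hb]

/-- `h1` is the sharper bound for `k ≥ r`, `h2` for `k ≤ r`. -/
lemma le_mul_zpow_mul_pow_natAbs_of_card_bounds {a b σ c C Q e p : ℝ} (ha : 0 < a)
    (hσ : 0 < σ) (hσ1 : σ < 1) (hbσ : b = (σ ^ 2 * a) ^ 2) (hbσ1 : 1 ≤ b * σ) (hc : 0 < c)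
    (hQ : 0 < Q) (hp : 0 ≤ p) {r : ℕ} {k : ℤ} (h1 : e * 1 ^ 2 ≤ C ^ 2 * b ^ r * p)
    (h2 : e * (σ ^ (k - r).natAbs / Q * (c * a ^ r) / a ^ k) ^ 2 ≤ C ^ 2 * b ^ r * p) :
    e ≤ (C ^ 2 + (C * Q / c) ^ 2) * b ^ k * σ ^ (k - r).natAbs * p := by
  have hb : 0 < b := by rw [hbσ]; positivity
  obtain ⟨n, rfl | rfl⟩ : ∃ n : ℕ, k = r + n ∨ k = r - n := ⟨(k - r).natAbs, by omega⟩
  · rw [show ((r + n : ℤ) - r).natAbs = n by omega, zpow_add₀ hb.ne', zpow_natCast,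
      zpow_natCast]
    have hX : 0 ≤ (C * Q / c) ^ 2 * (b ^ r * b ^ n) * σ ^ n * p := by positivity
    calc e ≤ C ^ 2 * b ^ r * p := by simpa using h1
      _ ≤ C ^ 2 * b ^ r * p * (b * σ) ^ n := le_mul_of_one_le_right (by positivity)
          (one_le_pow₀ hbσ1)
      _ ≤ _ := by rw [mul_pow]; linarith
  · rw [show ((r - n : ℤ) - r).natAbs = n by omega] at h2 ⊢
    have hΘ : σ ^ n / Q * (c * a ^ r) / a ^ (r - n : ℤ) = c / Q * (σ ^ n * a ^ n) := by
      rw [zpow_sub₀ ha.ne', zpow_natCast, zpow_natCast]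
      field_simp
    have hbr : b ^ r = b ^ (r - n : ℤ) * σ ^ n * σ ^ n * (σ ^ n * a ^ n) ^ 2 := by
      have hbn : b ^ n = σ ^ n * σ ^ n * (σ ^ n * a ^ n) ^ 2 := by rw [hbσ]; ring
      rw [mul_assoc _ (σ ^ n), mul_assoc, ← mul_assoc (σ ^ n), ← hbn, ← zpow_natCast,
        ← zpow_natCast b n, ← zpow_add₀ hb.ne', sub_add_cancel]
    rw [hΘ, hbr] at h2
    have h3 : e * (c / Q) ^ 2 ≤ C ^ 2 * b ^ (r - n : ℤ) * σ ^ n * σ ^ n * p := by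
      refine le_of_mul_le_mul_right ?_ (by positivity : 0 < (σ ^ n * a ^ n) ^ 2)
      calc _ = e * (c / Q * (σ ^ n * a ^ n)) ^ 2 := by ring
        _ ≤ _ := h2
        _ = _ := by ring
    have hX : 0 ≤ C ^ 2 * b ^ (r - n : ℤ) * σ ^ n * p := by positivity
    calc e = e * (c / Q) ^ 2 * (Q / c) ^ 2 := by field_simp
      _ ≤ C ^ 2 * b ^ (r - n : ℤ) * σ ^ n * σ ^ n * p * (Q / c) ^ 2 := by gcongr
      _ = (C * Q / c) ^ 2 * b ^ (r - n : ℤ) * σ ^ n * p * σ ^ n := by ring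
      _ ≤ (C * Q / c) ^ 2 * b ^ (r - n : ℤ) * σ ^ n * p :=
          mul_le_of_le_one_right (by positivity) (pow_le_one₀ hσ.le hσ1.le)
      _ ≤ _ := by linarith

lemma card_le_of_forall_lt_card_bipartiteAbove {V : Type*} {d : V → V → ℕ} {a b σ c C Q : ℝ}
    (hbil : BilinearEstimate d a b C) (ha : 0 < a) (hσ : 0 < σ) (hσ1 : σ < 1)
    (hbσ : b = (σ ^ 2 * a) ^ 2) (hbσ1 : 1 ≤ b * σ) (hc : 0 < c) (hQ : 0 < Q) {r : ℕ} {k : ℤ}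
    {E F : Finset V} (hE : ∀ x ∈ E, σ ^ (k - r).natAbs / Q * (c * a ^ r) <
      a ^ k * #(F.bipartiteAbove (fun x y => d x y ≤ r) x)) :
    (#E : ℝ) ≤ (C ^ 2 + (C * Q / c) ^ 2) * b ^ k * σ ^ (k - r).natAbs * #F := by
  have hb : 0 ≤ b := hbσ ▸ sq_nonneg _
  refine le_mul_zpow_mul_pow_natAbs_of_card_bounds ha hσ hσ1 hbσ hbσ1 hc hQ (Nat.cast_nonneg _)
    (hbil.card_mul_sq_le ha hb one_pos fun x hx => ?_)
    (hbil.card_mul_sq_le ha hb (by positivity) fun x hx =>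
      (div_le_iff₀' (zpow_pos ha k)).mpr (hE x hx).le)
  have h := (hE x hx).trans_le' (by positivity : (0 : ℝ) ≤ _)
  have : 0 < #(F.bipartiteAbove (fun x y => d x y ≤ r) x) := by
    exact_mod_cast pos_of_mul_pos_right h (zpow_pos ha k).le
  exact_mod_cast this

lemma card_le_sum_of_card_fiber_le {V : Type*} {T : Finset V} (w : V → ℕ × ℤ)
    {F : ℤ → Finset V} {D σ : ℝ} {β : ℤ → ℝ} (hσ0 : 0 ≤ σ) (hσ1 : σ < 1) (hD : 0 ≤ D)
    (hβ : ∀ k, 0 ≤ β k)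
    (hfiber : ∀ r k, (#{x ∈ T | w x = (r, k)} : ℝ) ≤ D * β k * σ ^ (k - r).natAbs * #(F k)) :
    (#T : ℝ) ≤ D * (∑' m : ℤ, σ ^ m.natAbs) * ∑ k ∈ T.image (Prod.snd ∘ w), β k * #(F k) := by
  classical
  set R := T.image (Prod.fst ∘ w)
  set K := T.image (Prod.snd ∘ w)
  calc (#T : ℝ) = ∑ p ∈ R ×ˢ K, (#{x ∈ T | w x = p} : ℝ) := by
        rw [card_eq_sum_card_fiberwise (f := w) (s := T) (t := R ×ˢ K) fun x hx =>
          mem_product.mpr ⟨mem_image_of_mem _ hx, mem_image_of_mem _ hx⟩, Nat.cast_sum]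
    _ ≤ ∑ p ∈ R ×ˢ K, D * β p.2 * σ ^ (p.2 - p.1).natAbs * #(F p.2) :=
        sum_le_sum fun p _ => hfiber p.1 p.2
    _ = ∑ k ∈ K, D * β k * #(F k) * ∑ r ∈ R, σ ^ (k - r).natAbs := by
        rw [sum_product_right]
        refine sum_congr rfl fun k _ => ?_
        rw [mul_sum]
        exact sum_congr rfl fun r _ => by ring
    _ ≤ ∑ k ∈ K, D * β k * #(F k) * ∑' m : ℤ, σ ^ m.natAbs := by
        gcongr with k
        · exact mul_nonneg (mul_nonneg hD (hβ k)) (Nat.cast_nonneg _)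
        · exact sum_pow_natAbs_le_tsum hσ0 hσ1 (fun r r' h => by simpa using h) R
    _ = _ := by rw [mul_sum]; exact sum_congr rfl fun k _ => by ring

lemma card_le_sum_zpow_mul_card_levelSet {V : Type*} [DecidableEq V] {d : V → V → ℕ}
    {f : V → ℝ} {lam a b c C σ : ℝ} {F : ℤ → Finset V} (hF : ∀ k, ↑(F k) = levelSet f lam a k)
    (hbil : BilinearEstimate d a b C)
    (hvol : ∀ (x : V) (r : ℕ), 1 ≤ r → c * a ^ r ≤ ({y | d x y ≤ r}.ncard : ℝ))
    (ha : 1 < a) (hc : 0 < c) (hlam : 0 < lam) (hσ : 0 < σ) (hσ1 : σ < 1)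
    (hbσ : b = (σ ^ 2 * a) ^ 2) (hbσ1 : 1 ≤ b * σ) {T : Finset V}
    (hT : ↑T ⊆ {x | lam < globalMax d f x}) :
    ∃ K : Finset ℤ, (#T : ℝ) ≤ (C ^ 2 + (C * (∑' m : ℤ, σ ^ m.natAbs) / c) ^ 2) *
      (∑' m : ℤ, σ ^ m.natAbs) * ∑ k ∈ K, b ^ k * #(F k) := by
  set Q := ∑' m : ℤ, σ ^ m.natAbs
  have hQ : 0 < Q := tsum_pow_natAbs_pos hσ.le hσ1
  have hwit : ∀ x ∈ T, ∃ p : ℕ × ℤ, σ ^ (p.2 - p.1).natAbs / Q * (c * a ^ p.1) <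
      a ^ p.2 * #((F p.2).bipartiteAbove (fun x y => d x y ≤ p.1) x) := fun x hx =>
    exists_dense_levelSet (θ := fun r k => σ ^ (k - r).natAbs / Q) hF ha hc hlam
      (fun r K => by
        rw [← sum_div, div_le_one hQ]
        exact sum_pow_natAbs_le_tsum hσ.le hσ1 (sub_left_injective (b := (r : ℤ))) K)
      hvol (hT hx)
  have hb : 0 ≤ b := hbσ ▸ sq_nonneg _
  choose! w hw using hwit
  refine ⟨T.image (Prod.snd ∘ w), card_le_sum_of_card_fiber_le w hσ.le hσ1 (by positivity)
    (fun k => by positivity) fun r k => ?_⟩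
  refine card_le_of_forall_lt_card_bipartiteAbove hbil (by linarith) hσ hσ1 hbσ hbσ1 hc hQ
    fun x hx => ?_
  obtain ⟨hxT, hwx⟩ := mem_filter.mp hx
  simpa [hwx] using hw x hxT

lemma count_le_ofReal_of_forall_finset {α : Type*} [MeasurableSpace α]
    [MeasurableSingletonClass α] {S : Set α} {M : ℝ}
    (h : ∀ T : Finset α, ↑T ⊆ S → (#T : ℝ) ≤ M) : Measure.count S ≤ ENNReal.ofReal M := by
  by_cases hS : S.Finite
  · rw [Measure.count_apply_finite S hS, ← ENNReal.ofReal_natCast]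
    exact ENNReal.ofReal_le_ofReal (h hS.toFinset (by simp))
  · obtain ⟨T, hTS, hT⟩ := Set.Infinite.exists_subset_card_eq hS (⌈M⌉₊ + 1)
    have := h T hTS
    rw [hT] at this
    push_cast at this
    linarith [Nat.le_ceil M]

theorem stmt_11_general {V : Type*} [MeasurableSpace V] (hms : ∀ s : Set V, MeasurableSet s)
    (d : V → V → ℕ) (a b c C τ : ℝ)
    (ha : 1 < a) (hab : a ≤ b) (hb : b < a ^ 2) (hc : 0 < c) (hC : 0 < C)
    (hτ : τ = Real.logb a b)
    (hvol : ∀ (x : V) (r : ℕ), 1 ≤ r →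
      c * a ^ r ≤ (({y : V | d x y ≤ r} : Set V).ncard : ℝ) ∧
        (({y : V | d x y ≤ r} : Set V).ncard : ℝ) ≤ C * b ^ r)
    (hbil : ∀ (r : ℕ) (E F : Set V), E.Finite → F.Finite →
      (({q : V × V | q.1 ∈ E ∧ q.2 ∈ F ∧ d q.1 q.2 ≤ r} : Set (V × V)).ncard : ℝ)
          / a ^ r ≤
        C * (Real.sqrt b / a) ^ r * Real.sqrt ((E.ncard : ℝ) * (F.ncard : ℝ))) :
    ∃ C' : ℝ, 0 < C' ∧ ∀ (f : V → ℝ) (lam : ℝ), 0 < lam →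
      Summable (fun x => |f x| ^ τ) →
      Measure.count {x : V | lam < globalMax d f x} ≤
        ENNReal.ofReal (C' * lam⁻¹ ^ τ * ∑' x : V, |f x| ^ τ) := by
  obtain ⟨σ, hσ, hσ1, hbσ, hbσ1⟩ := exists_decay_rate ha hab hb
  have hτ0 : 0 < τ := hτ ▸ Real.logb_pos ha (ha.trans_le hab)
  have haτ : a ^ τ = b := hτ ▸ Real.rpow_logb (by linarith) ha.ne' (by linarith)
  have hb0 : 0 < b := by linarith
  set Q := ∑' m : ℤ, σ ^ m.natAbs
  have hQ : 0 < Q := tsum_pow_natAbs_pos hσ.le hσ1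
  refine ⟨(C ^ 2 + (C * Q / c) ^ 2) * Q * b, by positivity, fun f lam hlam hsum => ?_⟩
  have : MeasurableSingletonClass V := ⟨fun x => hms {x}⟩
  refine count_le_ofReal_of_forall_finset fun T hT => ?_
  classical
  set F := fun k => (levelSet_finite ha hlam hτ0 hsum k).toFinset
  have hF : ∀ k, ↑(F k) = levelSet f lam a k := fun k => Set.Finite.coe_toFinset _
  obtain ⟨K, hK⟩ := card_le_sum_zpow_mul_card_levelSet hF hbil (fun x r hr => (hvol x r hr).1)
    ha hc hlam hσ hσ1 hbσ hbσ1 hT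
  calc (#T : ℝ) ≤ (C ^ 2 + (C * Q / c) ^ 2) * Q * ∑ k ∈ K, b ^ k * #(F k) := hK
    _ ≤ (C ^ 2 + (C * Q / c) ^ 2) * Q * (b * lam⁻¹ ^ τ * ∑' y, |f y| ^ τ) := by
        gcongr
        exact sum_zpow_mul_card_le_tsum hF ha hlam hτ0.le haτ hsum K
    _ = _ := by ring

/-- On a countable metric measure space with integer metric `d`,
counting measure, volume bounds `c·a^r ≤ #B_r(x) ≤ C·b^r` (`1 < a ≤ b < a²`,
`τ = log_a b`) and the bilinear estimate, the global maximal operator `M_∞` is of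
weak type `(τ,τ)`. -/
theorem stmt_11 {V : Type*} [MeasurableSpace V] (hms : ∀ s : Set V, MeasurableSet s)
    (d : V → V → ℕ) (a b c C τ : ℝ)
    (hd0 : ∀ x y : V, d x y = 0 ↔ x = y)
    (hdsymm : ∀ x y : V, d x y = d y x)
    (hdtri : ∀ x y z : V, d x z ≤ d x y + d y z)
    (hfin : ∀ (x : V) (r : ℕ), ({y : V | d x y ≤ r} : Set V).Finite)
    (ha : 1 < a) (hab : a ≤ b) (hb : b < a ^ 2) (hc : 0 < c) (hC : 0 < C)
    (hτ : τ = Real.logb a b)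
    (hvol : ∀ (x : V) (r : ℕ), 1 ≤ r →
      c * a ^ r ≤ (({y : V | d x y ≤ r} : Set V).ncard : ℝ) ∧
        (({y : V | d x y ≤ r} : Set V).ncard : ℝ) ≤ C * b ^ r)
    (hbil : ∀ (r : ℕ) (E F : Set V), E.Finite → F.Finite →
      (({q : V × V | q.1 ∈ E ∧ q.2 ∈ F ∧ d q.1 q.2 ≤ r} : Set (V × V)).ncard : ℝ)
          / a ^ r ≤
        C * (Real.sqrt b / a) ^ r * Real.sqrt ((E.ncard : ℝ) * (F.ncard : ℝ))) :
    ∃ C' : ℝ, 0 < C' ∧ ∀ (f : V → ℝ) (lam : ℝ), 0 < lam →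
      Summable (fun x => |f x| ^ τ) →
      Measure.count {x : V | lam < globalMax d f x} ≤
        ENNReal.ofReal (C' * lam⁻¹ ^ τ * ∑' x : V, |f x| ^ τ) :=
  stmt_11_general hms d a b c C τ ha hab hb hc hC hτ hvol hbil
end

section
/- Let T be the rooted tree embedded in a δ-hyperbolic geodesic space X constructed via maximal 1-separated sets in spheres around o, so that d_T(z,o) = d(z,o) for every vertex z and each tree geodesic from o to a vertex z is a (2,4)-quasi-geodesic in X lying within distance D_{2,4} of the X-geodesic [o,z] (Morse lemma). Then for any vertex z and any vertex z' on the tree geodesic from o to z, |d(z,z') − d_T(z,z')| ≤ 2·D_{2,4}; consequently d_T(z,z') ≥ d(z,z') − 4·D_{2,4} for all pairs of vertices z, z' of T. -/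
/-- Let `ι : V → X` embed a rooted tree (root `o`, predecessor `p`,
level `lvl`, with `d(ι z, ι o) = lvl z`) into a metric space so that, by the Morse
lemma, every vertex `p^[j] z` of the tree geodesic from `o` to `z` is within
distance `D` of a point of the geodesic `[ι o, ι z]`. Then
`|d(ι z, ι (p^[j] z)) − j| ≤ 2D` for `j ≤ lvl z`, and for every pair of vertices
with a common ancestor `m = p^[j] z = p^[k] z'` one has `d(ι z, ι z') − 4D ≤ j + k`
(i.e. `d_T ≥ d − 4D`). -/
theorem stmt_15 {X : Type*} [MetricSpace X] {V : Type*} (ι : V → X) (o : V) (p : V → V)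
    (lvl : V → ℕ) (D : ℝ) (hD : 0 ≤ D)
    (hroot : ∀ z : V, p^[lvl z] z = o) (hpo : p o = o)
    (hlvl : ∀ z : V, dist (ι z) (ι o) = lvl z)
    (hplvl : ∀ z : V, z ≠ o → lvl (p z) + 1 = lvl z)
    (hmorse : ∀ (z : V) (j : ℕ), j ≤ lvl z →
      ∃ w : X, dist (ι o) w + dist w (ι z) = dist (ι o) (ι z) ∧
        dist (ι (p^[j] z)) w ≤ D) :
    (∀ (z : V) (j : ℕ), j ≤ lvl z →
      |dist (ι z) (ι (p^[j] z)) - (j : ℝ)| ≤ 2 * D) ∧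
    ∀ (z z' m : V) (j k : ℕ), p^[j] z = m → p^[k] z' = m →
      dist (ι z) (ι z') - 4 * D ≤ (j : ℝ) + (k : ℝ) := by
  have hlo : lvl o = 0 := by
    have h := hlvl o
    simp only [dist_self] at h
    exact_mod_cast h.symm
  have hlvl_iter : ∀ (j : ℕ) (z : V), j ≤ lvl z → lvl (p^[j] z) = lvl z - j := by
    intro j
    induction j with
    | zero => intro z _; simp
    | succ n ih =>
      intro z hj
      have h1 : n ≤ lvl z := Nat.le_of_succ_le hj
      have h2 := ih z h1
      have hne : p^[n] z ≠ o := by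
        intro h; rw [h, hlo] at h2; omega
      have h3 := hplvl _ hne
      rw [Function.iterate_succ_apply']
      omega
  have part1 : ∀ (z : V) (j : ℕ), j ≤ lvl z →
      |dist (ι z) (ι (p^[j] z)) - (j : ℝ)| ≤ 2 * D := by
    intro z j hj
    obtain ⟨w, hw1, hw2⟩ := hmorse z j hj
    have hm : dist (ι (p^[j] z)) (ι o) = (lvl z : ℝ) - j := by
      rw [hlvl, hlvl_iter j z hj, Nat.cast_sub hj]
    have t1 := dist_triangle (ι o) (ι (p^[j] z)) w
    have t2 := dist_triangle (ι o) w (ι (p^[j] z))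
    have t3 := dist_triangle (ι z) w (ι (p^[j] z))
    have t4 := dist_triangle (ι z) (ι (p^[j] z)) w
    have hz := hlvl z
    rw [dist_comm (ι o) (ι (p^[j] z)), hm] at t1 t2
    rw [dist_comm w (ι (p^[j] z))] at t2 t3
    rw [dist_comm (ι z) w] at t3 t4
    rw [dist_comm (ι z) (ι o)] at hz
    rw [abs_le]
    constructor <;> linarith
  refine ⟨part1, ?_⟩
  have key : ∀ (z : V) (j : ℕ), dist (ι z) (ι (p^[j] z)) ≤ (j : ℝ) + 2 * D := by
    intro z j
    rcases le_or_gt j (lvl z) with h | h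
    · have := (abs_le.1 (part1 z j h)).2
      linarith
    · have ho : p^[j] z = o := by
        have e : p^[j] z = p^[j - lvl z] (p^[lvl z] z) := by
          rw [← Function.iterate_add_apply]
          congr 1
          omega
        rw [e, hroot, Function.iterate_fixed hpo]
      rw [ho, hlvl]
      have : (lvl z : ℝ) ≤ j := by exact_mod_cast h.le
      linarith
  intro z z' m j k hj hk
  have t := dist_triangle (ι z) (ι m) (ι z')
  have k1 := key z j
  have k2 := key z' k
  rw [hj] at k1
  rw [hk, dist_comm (ι z') (ι m)] at k2
  linarith
end

section
/- Let Γ be a quasi-spider's web with graph metric d_Γ and Γ̂ the spider's web completion obtained by adding, for same-level vertices x=p^j(v), y=p^j(w) with v ∼ w in Γ, an edge between x and y. Then there is a constant K (depending only on the quasi-spider's web parameter m) such that d_{Γ̂}(x,y) ≤ d_Γ(x,y) ≤ d_{Γ̂}(x,y) + 2K for all vertices x, y; in particular the identity map is a strict 2K-rough isometry between (Γ, d_Γ) and (Γ̂, d_{Γ̂}). -/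
/-!
The map `p^[m]` sends every edge of `Γ̂` to an edge of `Γ` or collapses it: for an added edge
`p^[j] v ∼ p^[j] w` this is the quasi-spider condition at level `m + j`. Hence `p^[m]` is
`1`-Lipschitz from `Γ̂` to `Γ`, and as every vertex is within `Γ`-distance `m` of its image,
`d_Γ(x, y) ≤ d_Γ̂(x, y) + 2m`. The other inequality holds because `Γ` is a subgraph of `Γ̂`.
-/

/-- A quasi-spider's web with parameter `m`: a graph built from a rooted tree
(root `o`, predecessor `p`, level `lvl`) by adding same-level edges such that
whenever two same-level vertices are joined by an edge, their `k`-th predecessors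
coincide or are neighbours for every `k` with `m ≤ k ≤` the common level. -/
structure QuasiSpiderWeb (V : Type*) where
  G : SimpleGraph V
  o : V
  p : V → V
  lvl : V → ℕ
  m : ℕ
  m_pos : 1 ≤ m
  lvl_root : lvl o = 0
  root_eq : ∀ x, lvl x = 0 → x = o
  p_root : p o = o
  p_lvl : ∀ x, x ≠ o → lvl (p x) + 1 = lvl x
  p_adj : ∀ x, x ≠ o → G.Adj x (p x)
  connected : G.Connected
  adj_lvl : ∀ x y, G.Adj x y → lvl x = lvl y ∨ x = p y ∨ y = p x
  quasi : ∀ x y, G.Adj x y → lvl x = lvl y → ∀ k, m ≤ k → k ≤ lvl x →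
    p^[k] x = p^[k] y ∨ G.Adj (p^[k] x) (p^[k] y)

/-- The spider's web completion `Γ̂` of a quasi-spider's web: the same vertices,
with an extra edge between `p^[j] v` and `p^[j] w` whenever `v ∼ w` are same-level
neighbours. -/
def QuasiSpiderWeb.hat {V : Type*} (Q : QuasiSpiderWeb V) : SimpleGraph V where
  Adj x y := Q.G.Adj x y ∨
    (x ≠ y ∧ ∃ (j : ℕ) (v w : V), Q.G.Adj v w ∧ Q.lvl v = Q.lvl w ∧
      Q.p^[j] v = x ∧ Q.p^[j] w = y)
  symm := by
    constructor
    rintro x y (h | ⟨hne, j, v, w, hvw, hl, hv, hw⟩)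
    · exact Or.inl h.symm
    · exact Or.inr ⟨hne.symm, j, w, v, hvw.symm, hl.symm, hw, hv⟩
  loopless := by
    constructor
    rintro x (h | ⟨hne, -⟩)
    · exact Q.G.ne_of_adj h rfl
    · exact hne rfl

namespace SimpleGraph

variable {V W : Type*} {G : SimpleGraph V} {H : SimpleGraph W}

lemma Walk.exists_walk_length_le_of_eq_or_adj {f : V → W}
    (hf : ∀ ⦃x y⦄, G.Adj x y → f x = f y ∨ H.Adj (f x) (f y)) {x y : V} :
    ∀ P : G.Walk x y, ∃ Q : H.Walk (f x) (f y), Q.length ≤ P.length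
  | .nil => ⟨.nil, le_rfl⟩
  | .cons h P => by
    obtain ⟨Q, hQ⟩ := exists_walk_length_le_of_eq_or_adj hf P
    rcases hf h with heq | hadj
    · exact ⟨Q.copy heq.symm rfl, by simp only [Walk.length_copy, Walk.length_cons]; omega⟩
    · exact ⟨.cons hadj Q, by simp only [Walk.length_cons]; omega⟩

lemma Reachable.dist_le_of_eq_or_adj {f : V → W}
    (hf : ∀ ⦃x y⦄, G.Adj x y → f x = f y ∨ H.Adj (f x) (f y)) {x y : V}
    (h : G.Reachable x y) : H.dist (f x) (f y) ≤ G.dist x y := by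
  obtain ⟨P, hP⟩ := h.exists_walk_length_eq_dist
  obtain ⟨Q, hQ⟩ := P.exists_walk_length_le_of_eq_or_adj hf
  exact (dist_le Q).trans (hP ▸ hQ)

lemma dist_iterate_le_of_eq_or_adj {f : V → V} (hf : ∀ x, f x = x ∨ G.Adj x (f x))
    (x : V) (n : ℕ) : G.dist x (f^[n] x) ≤ n := by
  induction n with
  | zero => simp
  | succ n ih =>
    rw [Function.iterate_succ_apply']
    rcases hf (f^[n] x) with heq | hadj
    · rw [heq]; omega
    · have := hadj.reachable.dist_triangle_right x
      rw [dist_eq_one_iff_adj.mpr hadj] at this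
      omega

end SimpleGraph

namespace QuasiSpiderWeb

variable {V : Type*} (Q : QuasiSpiderWeb V)

lemma iterate_p_eq_root {x : V} {k : ℕ} (hk : Q.lvl x ≤ k) : Q.p^[k] x = Q.o := by
  induction k generalizing x with
  | zero => exact Q.root_eq x (by omega)
  | succ k ih =>
    by_cases hx : x = Q.o
    · rw [hx, Function.iterate_fixed Q.p_root]
    · rw [Function.iterate_succ_apply]
      exact ih (by have := Q.p_lvl x hx; omega)

lemma p_eq_or_adj (x : V) : Q.p x = x ∨ Q.G.Adj x (Q.p x) := by
  by_cases hx : x = Q.o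
  · left; rw [hx, Q.p_root]
  · exact Or.inr (Q.p_adj x hx)

lemma iterate_p_eq_or_adj_of_lvl_eq {v w : V} (h : Q.G.Adj v w) (hl : Q.lvl v = Q.lvl w)
    {k : ℕ} (hk : Q.m ≤ k) : Q.p^[k] v = Q.p^[k] w ∨ Q.G.Adj (Q.p^[k] v) (Q.p^[k] w) := by
  by_cases hkv : k ≤ Q.lvl v
  · exact Q.quasi v w h hl k hk hkv
  · exact Or.inl ((Q.iterate_p_eq_root (by omega)).trans (Q.iterate_p_eq_root (by omega)).symm)

lemma iterate_m_eq_or_adj_of_hat_adj {x y : V} (h : Q.hat.Adj x y) :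
    Q.p^[Q.m] x = Q.p^[Q.m] y ∨ Q.G.Adj (Q.p^[Q.m] x) (Q.p^[Q.m] y) := by
  rcases h with h | ⟨-, j, v, w, hvw, hl, rfl, rfl⟩
  · rcases Q.adj_lvl x y h with hl | rfl | rfl
    · exact Q.iterate_p_eq_or_adj_of_lvl_eq h hl le_rfl
    · rw [← Function.iterate_succ_apply, Function.iterate_succ_apply']
      exact (Q.p_eq_or_adj _).imp id SimpleGraph.Adj.symm
    · rw [← Function.iterate_succ_apply, Function.iterate_succ_apply']
      exact (Q.p_eq_or_adj _).imp Eq.symm id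
  · simp only [← Function.iterate_add_apply]
    exact Q.iterate_p_eq_or_adj_of_lvl_eq hvw hl (Nat.le_add_right _ _)

end QuasiSpiderWeb

/-- The graph metric of a quasi-spider's web `Γ` and that of its
spider's web completion `Γ̂` differ by a bounded amount: there is `K` (depending
only on the parameter `m`) with `d_{Γ̂} ≤ d_Γ ≤ d_{Γ̂} + 2K`; in particular the
identity is a strict `2K`-rough isometry between `(Γ, d_Γ)` and `(Γ̂, d_{Γ̂})`. -/
theorem stmt_19 {V : Type*} (Q : QuasiSpiderWeb V) :
    ∃ K : ℕ, K ≤ Q.m ∧ ∀ x y : V,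
      Q.hat.dist x y ≤ Q.G.dist x y ∧ Q.G.dist x y ≤ Q.hat.dist x y + 2 * K := by
  have hG_le_hat : Q.G ≤ Q.hat := fun _ _ h => Or.inl h
  refine ⟨Q.m, le_rfl, fun x y => ⟨(Q.connected.preconnected x y).dist_anti hG_le_hat, ?_⟩⟩
  set x' := Q.p^[Q.m] x
  set y' := Q.p^[Q.m] y
  have hproj : Q.G.dist x' y' ≤ Q.hat.dist x y :=
    ((Q.connected.mono hG_le_hat).preconnected x y).dist_le_of_eq_or_adj
      fun _ _ => Q.iterate_m_eq_or_adj_of_hat_adj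
  have hx : Q.G.dist x x' ≤ Q.m := SimpleGraph.dist_iterate_le_of_eq_or_adj Q.p_eq_or_adj x Q.m
  have hy : Q.G.dist y y' ≤ Q.m := SimpleGraph.dist_iterate_le_of_eq_or_adj Q.p_eq_or_adj y Q.m
  calc Q.G.dist x y ≤ Q.G.dist x x' + Q.G.dist x' y := Q.connected.dist_triangle
    _ ≤ Q.G.dist x x' + (Q.G.dist x' y' + Q.G.dist y y') := by
        rw [SimpleGraph.dist_comm (u := y)]
        gcongr
        exact Q.connected.dist_triangle
    _ ≤ Q.hat.dist x y + 2 * Q.m := by omega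
end
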